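/- arXiv:2206.09945 — 2 statements merged into one kernel-verified Lean document; each statement's English description precedes it below -/
import Mathlib

section
/- Assume (A12, A22) is observable and (A, B) is controllable, let B_x, C_x ∈ ℝ^{p×p} be invertible, let A_x ∈ ℝ^{p×p} and K ∈ ℝ^{(n−p)×p} be arbitrary, and define Â := [[A_x, B_x·A12],[0, A22 + K·A12]] ∈ ℝ^{n×n}, B̂ := [[A_x·B_x − B_x·A11 + B_x·A12·K, B_x·B1],[K·A12·K + A22·K − K·A11 − A21, K·B1 + B2]] ∈ ℝ^{n×(p+m)}, Ĉ := [C_x, 0] ∈ ℝ^{p×n}. Then for every μ ∈ ℂ the complexified stacked matrix [Â − μI_n; Ĉ] has full column rank n and the complexified matrix [Â − μI_n, B̂] has full row rank n; that is, the realization (Â, B̂, Ĉ) of the factorization [M N] is observable and controllable, hence minimal. -/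
open Matrix Polynomial

set_option synthInstance.maxHeartbeats 1000000
set_option maxHeartbeats 1000000

noncomputable section

/-- The field of real rational functions. -/
abbrev FF : Type := RatFunc ℝ

/-- The rational function `λ` (the image of the polynomial indeterminate `X`). -/
noncomputable def lam : FF := RatFunc.X

/-- Entrywise embedding of a real matrix into matrices over `FF`. -/
noncomputable def mapF {k l : Type} (M : Matrix k l ℝ) : Matrix k l FF :=
  M.map (algebraMap ℝ FF)

/-- The pencil `λ I - M` over `FF`, for a real square matrix `M`. -/
noncomputable def lamI {k : Type} [Fintype k] [DecidableEq k] (M : Matrix k k ℝ) :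
    Matrix k k FF := lam • (1 : Matrix k k FF) - mapF M

/-- Entrywise complexification of a real matrix. -/
def mapC {k l : Type} (M : Matrix k l ℝ) : Matrix k l ℂ :=
  M.map (algebraMap ℝ ℂ)

/-- A real rational function is stable if every complex root of its reduced denominator
has real part `< 0`. -/
def StableF (f : RatFunc ℝ) : Prop :=
  ∀ z : ℂ, ((f.denom).map (algebraMap ℝ ℂ)).IsRoot z → z.re < 0

/-- A real square matrix is Hurwitz if all roots of its characteristic polynomial
have real part `< 0`. -/
def IsHurwitz {k : Type} [Fintype k] [DecidableEq k] (M : Matrix k k ℝ) : Prop :=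
  ∀ z : ℂ, ((M.charpoly).map (algebraMap ℝ ℂ)).IsRoot z → z.re < 0

/-- `A_K := K A11 - K A12 K + A21 - A22 K`. -/
noncomputable def AKmat {p r : ℕ} (A11 : Matrix (Fin p) (Fin p) ℝ)
    (A12 : Matrix (Fin p) (Fin r) ℝ) (A21 : Matrix (Fin r) (Fin p) ℝ)
    (A22 : Matrix (Fin r) (Fin r) ℝ) (K : Matrix (Fin r) (Fin p) ℝ) :
    Matrix (Fin r) (Fin p) ℝ :=
  K * A11 - K * A12 * K + A21 - A22 * K

/-- The `W` member of the SRTR pair obtained from `K`. -/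
noncomputable def srtrW {p r : ℕ} (A11 : Matrix (Fin p) (Fin p) ℝ)
    (A12 : Matrix (Fin p) (Fin r) ℝ) (A21 : Matrix (Fin r) (Fin p) ℝ)
    (A22 : Matrix (Fin r) (Fin r) ℝ) (K : Matrix (Fin r) (Fin p) ℝ) :
    Matrix (Fin p) (Fin p) FF :=
  mapF (A11 - A12 * K) +
    mapF A12 * (lamI (A22 + K * A12))⁻¹ * mapF (AKmat A11 A12 A21 A22 K)

/-- The `V` member of the SRTR pair obtained from `K`. -/
noncomputable def srtrV {p r m : ℕ} (A12 : Matrix (Fin p) (Fin r) ℝ)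
    (A22 : Matrix (Fin r) (Fin r) ℝ) (B1 : Matrix (Fin p) (Fin m) ℝ)
    (B2 : Matrix (Fin r) (Fin m) ℝ) (K : Matrix (Fin r) (Fin p) ℝ) :
    Matrix (Fin p) (Fin m) FF :=
  mapF B1 + mapF A12 * (lamI (A22 + K * A12))⁻¹ * mapF (K * B1 + B2)

/-- The plant transfer function `G = [I_p 0] (λ I_n - A)⁻¹ B`. -/
noncomputable def plantG {p r m : ℕ} (A11 : Matrix (Fin p) (Fin p) ℝ)
    (A12 : Matrix (Fin p) (Fin r) ℝ) (A21 : Matrix (Fin r) (Fin p) ℝ)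
    (A22 : Matrix (Fin r) (Fin r) ℝ) (B1 : Matrix (Fin p) (Fin m) ℝ)
    (B2 : Matrix (Fin r) (Fin m) ℝ) : Matrix (Fin p) (Fin m) FF :=
  fromCols (1 : Matrix (Fin p) (Fin p) FF) (0 : Matrix (Fin p) (Fin r) FF) *
    (lamI (fromBlocks A11 A12 A21 A22))⁻¹ * mapF (fromRows B1 B2)

/-- `(A12, A22)` is observable: `[A22 - μ I ; A12]` has full column rank for all `μ : ℂ`. -/
def ObsPair {p r : ℕ} (A12 : Matrix (Fin p) (Fin r) ℝ)
    (A22 : Matrix (Fin r) (Fin r) ℝ) : Prop :=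
  ∀ μ : ℂ, (fromRows (mapC A22 - μ • (1 : Matrix (Fin r) (Fin r) ℂ)) (mapC A12)).rank = r

/-- `(A, B)` is controllable: `[A - μ I, B]` has full row rank for all `μ : ℂ`. -/
def CtrbPair {p r m : ℕ} (A : Matrix (Fin p ⊕ Fin r) (Fin p ⊕ Fin r) ℝ)
    (B : Matrix (Fin p ⊕ Fin r) (Fin m) ℝ) : Prop :=
  ∀ μ : ℂ, (fromCols (mapC A - μ • (1 : Matrix (Fin p ⊕ Fin r) (Fin p ⊕ Fin r) ℂ))
    (mapC B)).rank = p + r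

/-!
Both claims are Popov–Belevitch–Hautus rank tests. For observability, a kernel vector
`(v₁, v₂)` of `[Â - μI; Ĉ]` has `Cx v₁ = 0`, hence `v₁ = 0`; the remaining rows then give
`A12 v₂ = 0` and `(A22 - μI) v₂ = 0`, so `v₂ = 0` by observability of `(A12, A22)`.
For controllability, `T = [[Bx, 0], [K, I]]` satisfies `T A + B̂ E = Â T` and `T B = B̂ F` with
`E = [[I, 0], [0, 0]]` and `F = [0; I]`: the pair `(Â, B̂)` comes from `(A, B)` by a change of
state coordinates, state feedback and an input transformation, so
`T [A - μI, B] = [Â - μI, B̂] S` for some `S`, and full row rank passes from the left-hand side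
to `[Â - μI, B̂]`.
-/

theorem Sum.elim_eq_zero_iff {α β γ : Type*} [Zero γ] {u : α → γ} {v : β → γ} :
    Sum.elim u v = 0 ↔ u = 0 ∧ v = 0 := by
  rw [← Sum.elim_zero_zero, Sum.elim_eq_iff]

namespace Matrix

section Field

variable {m n 𝕜 : Type*} [Field 𝕜]

theorem rank_eq_card_width_iff [Fintype n] (A : Matrix m n 𝕜) :
    A.rank = Fintype.card n ↔ ∀ v, A *ᵥ v = 0 → v = 0 := by
  have h := LinearMap.finrank_range_add_finrank_ker A.mulVecLin
  rw [Module.finrank_fintype_fun_eq_card] at h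
  calc A.rank = Fintype.card n ↔ Module.finrank 𝕜 (LinearMap.ker A.mulVecLin) = 0 := by
        rw [rank]; omega
    _ ↔ LinearMap.ker A.mulVecLin = ⊥ := Submodule.finrank_eq_zero
    _ ↔ ∀ v, A *ᵥ v = 0 → v = 0 := LinearMap.ker_eq_bot'

theorem rank_eq_card_height_of_mul_eq [Fintype m] [DecidableEq m] {k l : Type*} [Fintype k]
    [Fintype l] {T : Matrix m m 𝕜} {X : Matrix m k 𝕜} {Y : Matrix m l 𝕜} (S : Matrix l k 𝕜)
    (hT : IsUnit T) (hTXY : T * X = Y * S) (hX : X.rank = Fintype.card m) :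
    Y.rank = Fintype.card m :=
  le_antisymm Y.rank_le_card_height <| calc
    Fintype.card m = (T * X).rank := by
      rw [rank_mul_eq_right_of_isUnit_det T X ((isUnit_iff_isUnit_det T).mp hT), hX]
    _ = (Y * S).rank := by rw [hTXY]
    _ ≤ Y.rank := rank_mul_le_left Y S

theorem rank_fromCols_sub_smul_one_of_mul_eq [Fintype n] [DecidableEq n] {k l : Type*}
    [Fintype k] [Fintype l] {A A' T : Matrix n n 𝕜} {B : Matrix n k 𝕜} {B' : Matrix n l 𝕜}
    {E : Matrix l n 𝕜} {F : Matrix l k 𝕜} (hT : IsUnit T) (hA : T * A + B' * E = A' * T)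
    (hB : T * B = B' * F) (μ : 𝕜) (h : (fromCols (A - μ • 1) B).rank = Fintype.card n) :
    (fromCols (A' - μ • 1) B').rank = Fintype.card n := by
  refine rank_eq_card_height_of_mul_eq (fromBlocks T 0 (-E) F) hT ?_ h
  rw [mul_fromCols, fromCols_mul_fromBlocks, Matrix.mul_sub, Matrix.sub_mul, ← hA, hB,
    Matrix.mul_smul, Matrix.smul_mul, Matrix.mul_one, Matrix.one_mul, Matrix.mul_zero,
    Matrix.mul_neg, zero_add]
  congr 1
  abel

end Field

theorem fromBlocks_sub_smul_one {p r R : Type*} [DecidableEq p] [DecidableEq r] [Ring R]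
    (A : Matrix p p R) (B : Matrix p r R) (C : Matrix r p R) (D : Matrix r r R) (μ : R) :
    fromBlocks A B C D - μ • 1 = fromBlocks (A - μ • 1) B C (D - μ • 1) := by
  ext (i | i) (j | j) <;> simp [one_apply]

end Matrix

open Matrix

variable {p r m : Type*} [Fintype p] [Fintype r] [Fintype m] [DecidableEq r]

section CommRing

variable {R : Type*} [CommRing R]

def stateChange (Bx : Matrix p p R) (K : Matrix r p R) : Matrix (p ⊕ r) (p ⊕ r) R :=
  fromBlocks Bx 0 K 1

theorem isUnit_stateChange [DecidableEq p] {Bx : Matrix p p R} (hBx : IsUnit Bx)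
    (K : Matrix r p R) : IsUnit (stateChange Bx K) := by
  rw [isUnit_iff_isUnit_det, stateChange, det_fromBlocks_zero₁₂, det_one, mul_one]
  exact (isUnit_iff_isUnit_det Bx).mp hBx

variable (A11 : Matrix p p R) (A12 : Matrix p r R) (A21 : Matrix r p R) (A22 : Matrix r r R)
  (B1 : Matrix p m R) (B2 : Matrix r m R) (Ax Bx : Matrix p p R) (K : Matrix r p R)

theorem stateChange_mul_add_mul_eq [DecidableEq p] :
    stateChange Bx K * fromBlocks A11 A12 A21 A22 +
        fromBlocks (Ax * Bx - Bx * A11 + Bx * A12 * K) (Bx * B1)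
            (K * A12 * K + A22 * K - K * A11 - A21) (K * B1 + B2) *
          (fromBlocks 1 0 0 0 : Matrix (p ⊕ m) (p ⊕ r) R) =
      fromBlocks Ax (Bx * A12) 0 (A22 + K * A12) * stateChange Bx K := by
  simp only [stateChange, fromBlocks_multiply, fromBlocks_add, Matrix.add_mul, Matrix.mul_assoc,
    Matrix.mul_zero, Matrix.zero_mul, Matrix.mul_one, Matrix.one_mul, add_zero, zero_add]
  congr 1 <;> abel

-- Without the ascriptions the product elaborates through the `CStarMatrix` multiplication
-- instance and `fromBlocks_mul_fromRows` no longer applies.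
theorem stateChange_mul_fromRows [DecidableEq m] :
    stateChange Bx K * fromRows B1 B2 =
      fromBlocks (Ax * Bx - Bx * A11 + Bx * A12 * K) (Bx * B1)
          (K * A12 * K + A22 * K - K * A11 - A21) (K * B1 + B2) *
        fromRows (0 : Matrix p m R) (1 : Matrix m m R) := by
  simp [stateChange, fromBlocks_mul_fromRows]

end CommRing

section Field

variable {𝕜 : Type*} [Field 𝕜]
  (A11 : Matrix p p 𝕜) (A12 : Matrix p r 𝕜) (A21 : Matrix r p 𝕜) (A22 : Matrix r r 𝕜)
  (B1 : Matrix p m 𝕜) (B2 : Matrix r m 𝕜) (Ax : Matrix p p 𝕜) {Bx Cx : Matrix p p 𝕜}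
  (K : Matrix r p 𝕜)

theorem rank_fromRows_realization [DecidableEq p] (hBx : IsUnit Bx) (hCx : IsUnit Cx) (μ : 𝕜)
    (hobs : (fromRows (A22 - μ • 1) A12).rank = Fintype.card r) :
    (fromRows (fromBlocks Ax (Bx * A12) 0 (A22 + K * A12) - μ • 1)
      (fromCols Cx (0 : Matrix p r 𝕜))).rank = Fintype.card (p ⊕ r) := by
  rw [rank_eq_card_width_iff] at hobs ⊢
  intro v hv
  rw [← Sum.elim_comp_inl_inr v] at hv ⊢
  generalize v ∘ Sum.inl = v1, v ∘ Sum.inr = v2 at hv ⊢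
  simp only [fromBlocks_sub_smul_one, fromRows_mulVec, fromBlocks_mulVec, fromCols_mulVec_sumElim,
    Sum.elim_comp_inl, Sum.elim_comp_inr, Sum.elim_eq_zero_iff, zero_mulVec, zero_add,
    add_zero] at hv
  obtain ⟨⟨h1, h2⟩, h3⟩ := hv
  obtain rfl : v1 = 0 := eq_zero_of_mulVec_eq_zero (hCx.map detMonoidHom).ne_zero h3
  have hA12 : A12 *ᵥ v2 = 0 := by
    refine eq_zero_of_mulVec_eq_zero (hBx.map detMonoidHom).ne_zero ?_
    simpa [mulVec_mulVec] using h1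
  have hA22 : (A22 - μ • 1) *ᵥ v2 = 0 := by
    simpa [add_sub_right_comm, add_mulVec, ← mulVec_mulVec, hA12] using h2
  rw [hobs v2 (by rw [fromRows_mulVec, hA22, hA12, Sum.elim_zero_zero]), Sum.elim_zero_zero]

theorem rank_fromCols_realization [DecidableEq p] [DecidableEq m] (hBx : IsUnit Bx) (μ : 𝕜)
    (hctrb : (fromCols (fromBlocks A11 A12 A21 A22 - μ • 1) (fromRows B1 B2)).rank =
      Fintype.card (p ⊕ r)) :
    (fromCols (fromBlocks Ax (Bx * A12) 0 (A22 + K * A12) - μ • 1)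
      (fromBlocks (Ax * Bx - Bx * A11 + Bx * A12 * K) (Bx * B1)
        (K * A12 * K + A22 * K - K * A11 - A21) (K * B1 + B2))).rank =
      Fintype.card (p ⊕ r) :=
  rank_fromCols_sub_smul_one_of_mul_eq (isUnit_stateChange hBx K)
    (stateChange_mul_add_mul_eq A11 A12 A21 A22 B1 B2 Ax Bx K)
    (stateChange_mul_fromRows A11 A12 A21 A22 B1 B2 Ax Bx K) μ hctrb

end Field

section mapC

variable {k l o k' l' : Type}

@[simp]
theorem mapC_zero : mapC (0 : Matrix k l ℝ) = 0 :=
  Matrix.map_zero _ (map_zero _)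

@[simp]
theorem mapC_add (M N : Matrix k l ℝ) : mapC (M + N) = mapC M + mapC N :=
  Matrix.map_add _ (map_add _) M N

@[simp]
theorem mapC_sub (M N : Matrix k l ℝ) : mapC (M - N) = mapC M - mapC N :=
  Matrix.map_sub _ (map_sub _) M N

@[simp]
theorem mapC_mul [Fintype l] (M : Matrix k l ℝ) (N : Matrix l o ℝ) :
    mapC (M * N) = mapC M * mapC N :=
  Matrix.map_mul

@[simp]
theorem mapC_fromBlocks (A : Matrix k l ℝ) (B : Matrix k l' ℝ) (C : Matrix k' l ℝ)
    (D : Matrix k' l' ℝ) :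
    mapC (fromBlocks A B C D) = fromBlocks (mapC A) (mapC B) (mapC C) (mapC D) :=
  fromBlocks_map A B C D _

@[simp]
theorem mapC_fromCols (A : Matrix k l ℝ) (B : Matrix k l' ℝ) :
    mapC (fromCols A B) = fromCols (mapC A) (mapC B) :=
  fromCols_map A B _

@[simp]
theorem mapC_fromRows (A : Matrix k l ℝ) (B : Matrix k' l ℝ) :
    mapC (fromRows A B) = fromRows (mapC A) (mapC B) :=
  fromRows_map A B _

theorem IsUnit.mapC {n : Type} [Fintype n] [DecidableEq n] {M : Matrix n n ℝ} (hM : IsUnit M) :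
    IsUnit (mapC M) :=
  hM.map (algebraMap ℝ ℂ).mapMatrix

end mapC

theorem stmt_9_general (p r m : ℕ)
    (A11 : Matrix (Fin p) (Fin p) ℝ) (A12 : Matrix (Fin p) (Fin r) ℝ)
    (A21 : Matrix (Fin r) (Fin p) ℝ) (A22 : Matrix (Fin r) (Fin r) ℝ)
    (B1 : Matrix (Fin p) (Fin m) ℝ) (B2 : Matrix (Fin r) (Fin m) ℝ)
    (hobs : ObsPair A12 A22)
    (hctrb : CtrbPair (fromBlocks A11 A12 A21 A22) (fromRows B1 B2))
    (Bx Cx : Matrix (Fin p) (Fin p) ℝ) (hBx : IsUnit Bx) (hCx : IsUnit Cx)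
    (Ax : Matrix (Fin p) (Fin p) ℝ) (K : Matrix (Fin r) (Fin p) ℝ) :
    let Ahat : Matrix (Fin p ⊕ Fin r) (Fin p ⊕ Fin r) ℝ :=
      fromBlocks Ax (Bx * A12) 0 (A22 + K * A12)
    let Bhat : Matrix (Fin p ⊕ Fin r) (Fin p ⊕ Fin m) ℝ :=
      fromBlocks (Ax * Bx - Bx * A11 + Bx * A12 * K) (Bx * B1)
        (K * A12 * K + A22 * K - K * A11 - A21) (K * B1 + B2)
    let Chat : Matrix (Fin p) (Fin p ⊕ Fin r) ℝ :=
      fromCols Cx (0 : Matrix (Fin p) (Fin r) ℝ)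
    (∀ μ : ℂ, (fromRows (mapC Ahat - μ • (1 : Matrix (Fin p ⊕ Fin r) (Fin p ⊕ Fin r) ℂ))
        (mapC Chat)).rank = p + r) ∧
    (∀ μ : ℂ, (fromCols (mapC Ahat - μ • (1 : Matrix (Fin p ⊕ Fin r) (Fin p ⊕ Fin r) ℂ))
        (mapC Bhat)).rank = p + r) := by
  intro Ahat Bhat Chat
  refine ⟨fun μ => ?_, fun μ => ?_⟩
  · simpa [Ahat, Chat] using rank_fromRows_realization (mapC A12) (mapC A22) (mapC Ax) (mapC K)
      hBx.mapC hCx.mapC μ (by simpa using hobs μ)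
  · simpa [Ahat, Bhat] using rank_fromCols_realization (mapC A11) (mapC A12) (mapC A21)
      (mapC A22) (mapC B1) (mapC B2) (mapC Ax) (mapC K) hBx.mapC μ (by simpa using hctrb μ)

/-- under observability and controllability, the realization `(Â, B̂, Ĉ)` of
the factorization `[M N]` is observable and controllable, hence minimal. -/
theorem stmt_9 (p r m : ℕ) (hp : 0 < p) (hr : 0 < r) (hm : 0 < m)
    (A11 : Matrix (Fin p) (Fin p) ℝ) (A12 : Matrix (Fin p) (Fin r) ℝ)
    (A21 : Matrix (Fin r) (Fin p) ℝ) (A22 : Matrix (Fin r) (Fin r) ℝ)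
    (B1 : Matrix (Fin p) (Fin m) ℝ) (B2 : Matrix (Fin r) (Fin m) ℝ)
    (hobs : ObsPair A12 A22)
    (hctrb : CtrbPair (fromBlocks A11 A12 A21 A22) (fromRows B1 B2))
    (Bx Cx : Matrix (Fin p) (Fin p) ℝ) (hBx : IsUnit Bx) (hCx : IsUnit Cx)
    (Ax : Matrix (Fin p) (Fin p) ℝ) (K : Matrix (Fin r) (Fin p) ℝ) :
    let Ahat : Matrix (Fin p ⊕ Fin r) (Fin p ⊕ Fin r) ℝ :=
      fromBlocks Ax (Bx * A12) 0 (A22 + K * A12)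
    let Bhat : Matrix (Fin p ⊕ Fin r) (Fin p ⊕ Fin m) ℝ :=
      fromBlocks (Ax * Bx - Bx * A11 + Bx * A12 * K) (Bx * B1)
        (K * A12 * K + A22 * K - K * A11 - A21) (K * B1 + B2)
    let Chat : Matrix (Fin p) (Fin p ⊕ Fin r) ℝ :=
      fromCols Cx (0 : Matrix (Fin p) (Fin r) ℝ)
    (∀ μ : ℂ, (fromRows (mapC Ahat - μ • (1 : Matrix (Fin p ⊕ Fin r) (Fin p ⊕ Fin r) ℂ))
        (mapC Chat)).rank = p + r) ∧
    (∀ μ : ℂ, (fromCols (mapC Ahat - μ • (1 : Matrix (Fin p ⊕ Fin r) (Fin p ⊕ Fin r) ℂ))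
        (mapC Bhat)).rank = p + r) :=
  stmt_9_general p r m A11 A12 A21 A22 B1 B2 hobs hctrb Bx Cx hBx hCx Ax K
end
end

section
/- Let F1 ∈ ℝ^{p×p}, F2 ∈ ℝ^{(n−p)×p}, let U ∈ ℝ^{p×p} be invertible, and let K ∈ ℝ^{(n−p)×p} satisfy the non-symmetric algebraic Riccati equation K·(A11 + F1) − K·A12·K + (A21 + F2) − A22·K = 0; set A_x := A11 + F1 − A12·K and define [M N] := [U, 0]·(λI_n − [[A11 + F1, A12],[A21 + F2, A22]])^{-1}·[[F1, B1],[F2, B2]] + [U, 0] with M ∈ F^{p×p}, N ∈ F^{p×m}. Then, with W and V the SRTR pair obtained from this same K, one has [W V] = [λI_p, 0] + (λI_p − A_x)·U^{-1}·[−M, N]; equivalently, W = λI_p − (λI_p − A_x)·U^{-1}·M and V = (λI_p − A_x)·U^{-1}·N. -/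
open Matrix Polynomial

set_option synthInstance.maxHeartbeats 1000000
set_option maxHeartbeats 1000000

noncomputable section

/-!
Write `L = λI - [[A11 + F1, A12], [A21 + F2, A22]]`, `P = λI - A_x` and
`Q = λI - (A22 + K A12)`. The Riccati equation says exactly `K (λI - A11 - F1) - (A21 + F2) = Q K`,
so the row `R = [I + A12 Q⁻¹ K, A12 Q⁻¹]` satisfies `R L = [P, 0]`, i.e. `[I, 0] L⁻¹ = P⁻¹ R`.
Hence `P U⁻¹ [M N] = R [[F1, B1], [F2, B2]] + [P, 0]`, and the two column blocks of the right-hand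
side are `λI - W` and `V` once the Riccati equation is used again in the form `A_K = -(K F1 + F2)`.
-/

theorem fromCols_add_fromCols {R k l o : Type*} [Add R] (a c : Matrix k l R) (b d : Matrix k o R) :
    fromCols a b + fromCols c d = fromCols (a + c) (b + d) := by
  ext i (j | j) <;> rfl

section BlockMatrices

variable {α : Type*} [CommRing α] {m n : Type*} [DecidableEq m] [DecidableEq n]

theorem smul_one_sub_fromBlocks (s : α) (a : Matrix m m α) (b : Matrix m n α)
    (c : Matrix n m α) (d : Matrix n n α) :
    s • 1 - fromBlocks a b c d = fromBlocks (s • 1 - a) (-b) (-c) (s • 1 - d) := by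
  rw [← fromBlocks_one, fromBlocks_smul, sub_eq_add_neg, fromBlocks_neg, fromBlocks_add]
  simp only [smul_zero, zero_add, sub_eq_add_neg]

variable [Fintype m] [Fintype n]

theorem fromCols_mul_pencil_of_riccati (s : α) (a : Matrix m m α) (b : Matrix m n α)
    (c : Matrix n m α) (d : Matrix n n α) (K : Matrix n m α)
    (hK : K * a - K * b * K + c - d * K = 0) (hQ : IsUnit (s • 1 - (d + K * b)).det) :
    fromCols (1 + b * (s • 1 - (d + K * b))⁻¹ * K) (b * (s • 1 - (d + K * b))⁻¹) *
        (s • 1 - fromBlocks a b c d) =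
      fromCols (s • 1 - (a - b * K)) 0 := by
  set Q := s • 1 - (d + K * b)
  have hQQ : Q⁻¹ * Q = 1 := nonsing_inv_mul Q hQ
  have hc : K * (s • 1 - a) - c = Q * K := by
    rw [← sub_eq_zero, ← neg_eq_zero, ← hK]
    simp only [Q, Matrix.mul_sub, Matrix.sub_mul, Matrix.add_mul, Matrix.mul_smul,
      Matrix.smul_mul, Matrix.mul_one, Matrix.one_mul, Matrix.mul_assoc]
    abel
  have hd : s • 1 - d - K * b = Q := by
    simp only [Q]; abel
  rw [smul_one_sub_fromBlocks, fromCols_mul_fromBlocks]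
  congr 1
  · calc (1 + b * Q⁻¹ * K) * (s • 1 - a) + b * Q⁻¹ * -c
        = s • 1 - a + b * Q⁻¹ * (K * (s • 1 - a) - c) := by
          simp only [Matrix.add_mul, Matrix.mul_sub, Matrix.one_mul, Matrix.mul_assoc,
            Matrix.mul_neg]
          abel
      _ = s • 1 - (a - b * K) := by
          rw [hc, ← Matrix.mul_assoc, Matrix.mul_assoc b, hQQ, Matrix.mul_one]
          abel
  · calc (1 + b * Q⁻¹ * K) * -b + b * Q⁻¹ * (s • 1 - d)
        = b * Q⁻¹ * (s • 1 - d - K * b) - b := by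
          simp only [Matrix.add_mul, Matrix.mul_sub, Matrix.mul_neg, Matrix.one_mul,
            Matrix.mul_assoc]
          abel
      _ = 0 := by rw [hd, Matrix.mul_assoc, hQQ, Matrix.mul_one, sub_self]

theorem fromCols_one_zero_mul_inv_pencil_of_riccati (s : α) (a : Matrix m m α)
    (b : Matrix m n α) (c : Matrix n m α) (d : Matrix n n α) (K : Matrix n m α)
    (hK : K * a - K * b * K + c - d * K = 0) (hQ : IsUnit (s • 1 - (d + K * b)).det)
    (hP : IsUnit (s • 1 - (a - b * K)).det) (hL : IsUnit (s • 1 - fromBlocks a b c d).det) :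
    fromCols (1 : Matrix m m α) (0 : Matrix m n α) * (s • 1 - fromBlocks a b c d)⁻¹ =
      (s • 1 - (a - b * K))⁻¹ *
        fromCols (1 + b * (s • 1 - (d + K * b))⁻¹ * K) (b * (s • 1 - (d + K * b))⁻¹) := by
  have key := fromCols_mul_pencil_of_riccati s a b c d K hK hQ
  set L := s • 1 - fromBlocks a b c d
  set P := s • 1 - (a - b * K)
  set R := fromCols (1 + b * (s • 1 - (d + K * b))⁻¹ * K) (b * (s • 1 - (d + K * b))⁻¹)
  have hPcols : fromCols (1 : Matrix m m α) (0 : Matrix m n α) = P⁻¹ * fromCols P 0 := by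
    rw [mul_fromCols, nonsing_inv_mul P hP, Matrix.mul_zero]
  rw [hPcols, ← key, Matrix.mul_assoc, Matrix.mul_assoc, mul_nonsing_inv L hL, Matrix.mul_one]

theorem fromCols_mul_inv_mul_fromBlocks_add_fromCols {o : Type*} (U P R₁ F₁ : Matrix m m α)
    (R₂ : Matrix m n α) (F₂ : Matrix n m α) (B₁ : Matrix m o α) (B₂ : Matrix n o α)
    (L : Matrix (m ⊕ n) (m ⊕ n) α) (hP : IsUnit P.det)
    (hrow : fromCols (1 : Matrix m m α) (0 : Matrix m n α) * L⁻¹ = P⁻¹ * fromCols R₁ R₂) :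
    fromCols U (0 : Matrix m n α) * L⁻¹ * fromBlocks F₁ B₁ F₂ B₂ + fromCols U (0 : Matrix m o α) =
      U * P⁻¹ * fromCols (R₁ * F₁ + R₂ * F₂ + P) (R₁ * B₁ + R₂ * B₂) := by
  have hUn : fromCols U (0 : Matrix m n α) = U * fromCols (1 : Matrix m m α) 0 := by
    rw [mul_fromCols, Matrix.mul_one, Matrix.mul_zero]
  have hUo : fromCols U (0 : Matrix m o α) = U * (P⁻¹ * fromCols P 0) := by
    rw [mul_fromCols, nonsing_inv_mul P hP, mul_fromCols, Matrix.mul_one, Matrix.mul_zero,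
      Matrix.mul_zero]
  rw [hUn, hUo, Matrix.mul_assoc U, hrow, Matrix.mul_assoc U, Matrix.mul_assoc P⁻¹,
    fromCols_mul_fromBlocks, ← Matrix.mul_add, ← Matrix.mul_add, fromCols_add_fromCols, add_zero,
    Matrix.mul_assoc U P⁻¹]

end BlockMatrices

section RationalFunctions

variable {k l o : Type}

@[simp]
theorem mapF_add (M N : Matrix k l ℝ) : mapF (M + N) = mapF M + mapF N :=
  Matrix.map_add _ (map_add _) M N

@[simp]
theorem mapF_sub (M N : Matrix k l ℝ) : mapF (M - N) = mapF M - mapF N :=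
  Matrix.map_sub _ (map_sub _) M N

@[simp]
theorem mapF_neg (M : Matrix k l ℝ) : mapF (-M) = -mapF M :=
  Matrix.map_neg _ (map_neg _) M

@[simp]
theorem mapF_zero : mapF (0 : Matrix k l ℝ) = 0 :=
  Matrix.map_zero _ (map_zero _)

@[simp]
theorem mapF_mul [Fintype l] (M : Matrix k l ℝ) (N : Matrix l o ℝ) :
    mapF (M * N) = mapF M * mapF N :=
  Matrix.map_mul

theorem mapF_fromBlocks {q : Type} (a : Matrix k l ℝ) (b : Matrix k q ℝ) (c : Matrix o l ℝ)
    (d : Matrix o q ℝ) :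
    mapF (fromBlocks a b c d) = fromBlocks (mapF a) (mapF b) (mapF c) (mapF d) :=
  fromBlocks_map a b c d _

theorem isUnit_det_mapF [Fintype k] [DecidableEq k] {M : Matrix k k ℝ} (hM : IsUnit M) :
    IsUnit (mapF M).det :=
  (isUnit_iff_isUnit_det _).mp (hM.map (algebraMap ℝ FF).mapMatrix)

theorem lamI_eq_map_charmatrix [Fintype k] [DecidableEq k] (M : Matrix k k ℝ) :
    lamI M = (charmatrix M).map (algebraMap ℝ[X] FF) := by
  ext i j
  by_cases h : i = j <;>
    simp [h, lamI, mapF, lam, charmatrix, RatFunc.algebraMap_X]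

theorem isUnit_det_lamI [Fintype k] [DecidableEq k] (M : Matrix k k ℝ) : IsUnit (lamI M).det := by
  rw [lamI_eq_map_charmatrix, ← RingHom.mapMatrix_apply, ← RingHom.map_det, isUnit_iff_ne_zero,
    ← charpoly, ne_eq, map_eq_zero_iff _ (IsFractionRing.injective ℝ[X] FF)]
  exact M.charpoly_monic.ne_zero

end RationalFunctions

theorem fromCols_one_zero_mul_inv_lamI_of_riccati {k l : Type} [Fintype k] [DecidableEq k]
    [Fintype l] [DecidableEq l] (A : Matrix k k ℝ) (B : Matrix k l ℝ) (C : Matrix l k ℝ)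
    (D : Matrix l l ℝ) (K : Matrix l k ℝ) (hK : K * A - K * B * K + C - D * K = 0) :
    fromCols (1 : Matrix k k FF) (0 : Matrix k l FF) * (lamI (fromBlocks A B C D))⁻¹ =
      (lamI (A - B * K))⁻¹ *
        fromCols (1 + mapF B * (lamI (D + K * B))⁻¹ * mapF K) (mapF B * (lamI (D + K * B))⁻¹) := by
  have hKF : mapF K * mapF A - mapF K * mapF B * mapF K + mapF C - mapF D * mapF K = 0 := by
    simpa using congrArg mapF hK
  have hQ := isUnit_det_lamI (D + K * B)
  have hP := isUnit_det_lamI (A - B * K)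
  have hL := isUnit_det_lamI (fromBlocks A B C D)
  simp only [lamI, mapF_fromBlocks, mapF_add, mapF_sub, mapF_mul] at hQ hP hL ⊢
  exact fromCols_one_zero_mul_inv_pencil_of_riccati lam _ _ _ _ _ hKF hQ hP hL

theorem AKmat_eq_neg_of_riccati {p r : ℕ} {A11 F1 : Matrix (Fin p) (Fin p) ℝ}
    {A12 : Matrix (Fin p) (Fin r) ℝ} {A21 F2 : Matrix (Fin r) (Fin p) ℝ}
    {A22 : Matrix (Fin r) (Fin r) ℝ} {K : Matrix (Fin r) (Fin p) ℝ}
    (hric : K * (A11 + F1) - K * A12 * K + (A21 + F2) - A22 * K = 0) :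
    AKmat A11 A12 A21 A22 K = -(K * F1 + F2) := by
  rw [eq_neg_iff_add_eq_zero, ← hric, AKmat, Matrix.mul_add]
  abel

theorem stmt_11_general (p r m : ℕ)
    (A11 : Matrix (Fin p) (Fin p) ℝ) (A12 : Matrix (Fin p) (Fin r) ℝ)
    (A21 : Matrix (Fin r) (Fin p) ℝ) (A22 : Matrix (Fin r) (Fin r) ℝ)
    (B1 : Matrix (Fin p) (Fin m) ℝ) (B2 : Matrix (Fin r) (Fin m) ℝ)
    (F1 : Matrix (Fin p) (Fin p) ℝ) (F2 : Matrix (Fin r) (Fin p) ℝ)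
    (U : Matrix (Fin p) (Fin p) ℝ) (hU : IsUnit U)
    (K : Matrix (Fin r) (Fin p) ℝ)
    (hric : K * (A11 + F1) - K * A12 * K + (A21 + F2) - A22 * K = 0) :
    let Ax : Matrix (Fin p) (Fin p) ℝ := A11 + F1 - A12 * K
    let MN : Matrix (Fin p) (Fin p ⊕ Fin m) FF :=
      fromCols (mapF U) (0 : Matrix (Fin p) (Fin r) FF) *
          (lamI (fromBlocks (A11 + F1) A12 (A21 + F2) A22))⁻¹ *
          mapF (fromBlocks F1 B1 F2 B2) +
        fromCols (mapF U) (0 : Matrix (Fin p) (Fin m) FF)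
    srtrW A11 A12 A21 A22 K =
      lam • (1 : Matrix (Fin p) (Fin p) FF) -
        (lam • (1 : Matrix (Fin p) (Fin p) FF) - mapF Ax) * (mapF U)⁻¹ * MN.toCols₁ ∧
    srtrV A12 A22 B1 B2 K =
      (lam • (1 : Matrix (Fin p) (Fin p) FF) - mapF Ax) * (mapF U)⁻¹ * MN.toCols₂ := by
  intro Ax MN
  set P := lamI Ax
  set Q := lamI (A22 + K * A12)
  set R₁ := 1 + mapF A12 * Q⁻¹ * mapF K
  set R₂ := mapF A12 * Q⁻¹
  have hP : IsUnit P.det := isUnit_det_lamI Ax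
  have hMN : MN = mapF U * P⁻¹ *
      fromCols (R₁ * mapF F1 + R₂ * mapF F2 + P) (R₁ * mapF B1 + R₂ * mapF B2) := by
    simp only [MN, mapF_fromBlocks]
    exact fromCols_mul_inv_mul_fromBlocks_add_fromCols _ _ _ _ _ _ _ _ _ hP
      (fromCols_one_zero_mul_inv_lamI_of_riccati _ _ _ _ K hric)
  have hcancel : ∀ {o : Type} (X : Matrix (Fin p) o FF), P * (mapF U)⁻¹ * (mapF U * P⁻¹ * X) = X := by
    intro o X
    simp only [Matrix.mul_assoc, nonsing_inv_mul_cancel_left _ _ (isUnit_det_mapF hU),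
      mul_nonsing_inv_cancel_left _ _ hP]
  rw [show lam • 1 - mapF Ax = P from rfl, hMN, mul_fromCols, toCols₁_fromCols, toCols₂_fromCols,
    hcancel, hcancel]
  constructor
  · rw [show P = lam • 1 - mapF Ax from rfl]
    simp only [srtrW, AKmat_eq_neg_of_riccati hric, R₁, R₂, Q, Ax, mapF_add, mapF_sub, mapF_mul,
      mapF_neg, Matrix.mul_add, Matrix.add_mul, Matrix.mul_neg, Matrix.one_mul, Matrix.mul_assoc]
    abel
  · simp only [srtrV, R₁, R₂, Q, mapF_add, mapF_mul, Matrix.mul_add, Matrix.add_mul,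
      Matrix.one_mul, Matrix.mul_assoc]
    abel

/-- if `K` solves the non-symmetric algebraic Riccati equation, the stable
SRTR pair obtained from the same `K` is recovered from the LCF `[M N]` via
`[W V] = [λ I_p, 0] + (λ I_p - A_x) U⁻¹ [-M, N]`. -/
theorem stmt_11 (p r m : ℕ) (hp : 0 < p) (hr : 0 < r) (hm : 0 < m)
    (A11 : Matrix (Fin p) (Fin p) ℝ) (A12 : Matrix (Fin p) (Fin r) ℝ)
    (A21 : Matrix (Fin r) (Fin p) ℝ) (A22 : Matrix (Fin r) (Fin r) ℝ)
    (B1 : Matrix (Fin p) (Fin m) ℝ) (B2 : Matrix (Fin r) (Fin m) ℝ)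
    (F1 : Matrix (Fin p) (Fin p) ℝ) (F2 : Matrix (Fin r) (Fin p) ℝ)
    (U : Matrix (Fin p) (Fin p) ℝ) (hU : IsUnit U)
    (K : Matrix (Fin r) (Fin p) ℝ)
    (hric : K * (A11 + F1) - K * A12 * K + (A21 + F2) - A22 * K = 0) :
    let Ax : Matrix (Fin p) (Fin p) ℝ := A11 + F1 - A12 * K
    let MN : Matrix (Fin p) (Fin p ⊕ Fin m) FF :=
      fromCols (mapF U) (0 : Matrix (Fin p) (Fin r) FF) *
          (lamI (fromBlocks (A11 + F1) A12 (A21 + F2) A22))⁻¹ *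
          mapF (fromBlocks F1 B1 F2 B2) +
        fromCols (mapF U) (0 : Matrix (Fin p) (Fin m) FF)
    srtrW A11 A12 A21 A22 K =
      lam • (1 : Matrix (Fin p) (Fin p) FF) -
        (lam • (1 : Matrix (Fin p) (Fin p) FF) - mapF Ax) * (mapF U)⁻¹ * MN.toCols₁ ∧
    srtrV A12 A22 B1 B2 K =
      (lam • (1 : Matrix (Fin p) (Fin p) FF) - mapF Ax) * (mapF U)⁻¹ * MN.toCols₂ :=
  stmt_11_general p r m A11 A12 A21 A22 B1 B2 F1 F2 U hU K hric
end
end
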